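/- Under coordinatewise Bregman domination of φ over ϕ (as in the confidence calibration lower bound), the pointwise sharpness gap ρ(p) = E[d_φ(π_{Y|X}, g(X)) | h(X) = p] − d_ϕ(E[𝟙_{Y=c(X)} | h(X) = p], p) is nonnegative for almost every p. -/

import Mathlib

open MeasureTheory

lemma condexp_pi_apply {Ω : Type*} [m0 : MeasurableSpace Ω] (μ : Measure Ω)
    [IsFiniteMeasure μ] {m : MeasurableSpace Ω} (hm : m ≤ m0) {k : ℕ}
    {f : Ω → (Fin k → ℝ)} (hf : Integrable f μ) (i : Fin k) :
    (fun ω => (μ[f|m]) ω i) =ᵐ[μ] μ[fun ω => f ω i|m] := by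
  haveI : IsFiniteMeasure (μ.trim hm) := isFiniteMeasure_trim hm
  letI : MeasurableSpace Ω := m0
  have hLi : ∀ (ψ : Ω → Fin k → ℝ), Integrable ψ μ → Integrable (fun ω => ψ ω i) μ :=
    fun ψ hψ => (ContinuousLinearMap.proj (R := ℝ) (φ := fun _ : Fin k => ℝ) i).integrable_comp hψ
  refine ae_eq_condExp_of_forall_setIntegral_eq hm (hLi f hf)
    (fun s _ _ => (hLi _ (integrable_condExp (m := m) (μ := μ) (f := f))).integrableOn)
    (fun s hs hμs => ?_)
    ((continuous_apply i).comp_stronglyMeasurable (stronglyMeasurable_condExp (m := m) (μ := μ) (f := f))).aestronglyMeasurable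
  have h1 : ∫ x in s, (μ[f|m]) x i ∂μ
      = (∫ x in s, (μ[f|m]) x ∂μ) i := by
    simpa using ContinuousLinearMap.integral_comp_comm
      (ContinuousLinearMap.proj (R := ℝ) (φ := fun _ : Fin k => ℝ) i)
      (integrable_condExp (m := m) (μ := μ) (f := f)).integrableOn
  have h2 : ∫ x in s, f x i ∂μ = (∫ x in s, f x ∂μ) i := by
    simpa using ContinuousLinearMap.integral_comp_comm
      (ContinuousLinearMap.proj (R := ℝ) (φ := fun _ : Fin k => ℝ) i) hf.integrableOn
  rw [h1, h2, setIntegral_condExp hm hf hs]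

lemma convexOn_grad_le {s : Set ℝ} {ϕ : ℝ → ℝ} (hconv : ConvexOn ℝ s ϕ) {x y f' : ℝ}
    (hx : x ∈ s) (hy : y ∈ s) (hd : HasDerivAt ϕ f' x) : ϕ x + f' * (y - x) ≤ ϕ y := by
  rcases lt_trichotomy x y with hxy | rfl | hyx
  · have h1 := hconv.le_slope_of_hasDerivAt hx hy hxy hd
    rw [slope_def_field] at h1
    have h2 : f' * (y - x) ≤ ϕ y - ϕ x := by
      rw [← le_div_iff₀ (by linarith)]; exact h1
    linarith
  · simp
  · have h1 := hconv.slope_le_of_hasDerivAt hy hx hyx hd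
    rw [slope_def_field] at h1
    have h2 : ϕ x - ϕ y ≤ f' * (x - y) := by
      rw [← div_le_iff₀ (by linarith)]; exact h1
    have h3 : f' * (y - x) = -(f' * (x - y)) := by ring
    rw [h3]; linarith

/-- **Nonnegativity of the pointwise sharpness gap.** Under coordinatewise Bregman domination of
`φ` over `ϕ`, the pointwise sharpness gap
`ρ(p) = E[d_φ(π_{Y|X}, g(X)) | h(X) = p] − d_ϕ(E[𝟙_{Y=c(X)} | h(X) = p], p)` is nonnegative for
almost every `p`; equivalently, almost surely
`d_ϕ(E[𝟙_{Y=c(X)} | h(X)], h(X)) ≤ E[d_φ(π_{Y|X}, g(X)) | h(X)]`. -/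
theorem pointwise_sharpness_gap_nonneg
    {Ω : Type*} [m0 : MeasurableSpace Ω] (μ : Measure Ω) [IsProbabilityMeasure μ]
    {d k : ℕ}
    (X : Ω → (Fin d → ℝ)) (Y : Ω → Fin k) (hX : Measurable X) (hY : Measurable Y)
    (g : (Fin d → ℝ) → (Fin k → ℝ)) (hg : Measurable g)
    (hgs : ∀ x, g x ∈ stdSimplex ℝ (Fin k))
    (c : (Fin k → ℝ) → Fin k) (h : (Fin k → ℝ) → ℝ)
    (hc : ∀ (z : Fin k → ℝ) (i : Fin k), z i ≤ z (c z)) (hh : ∀ z, h z = z (c z))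
    (hcmeas : Measurable[MeasurableSpace.comap (fun ω => g (X ω)) inferInstance]
      (fun ω => c (g (X ω))))
    (φ : (Fin k → ℝ) → ℝ) (Dφ : (Fin k → ℝ) → ((Fin k → ℝ) →L[ℝ] ℝ))
    (ϕ : ℝ → ℝ) (Dϕ : ℝ → ℝ)
    (hφC1 : ContDiff ℝ 1 φ) (hϕC1 : ContDiff ℝ 1 ϕ)
    (hφconv : ConvexOn ℝ (stdSimplex ℝ (Fin k)) φ)
    (hϕconv : ConvexOn ℝ (Set.Icc 0 1) ϕ)
    (hDφ : ∀ y, HasFDerivAt φ (Dφ y) y) (hDϕ : ∀ y, HasDerivAt ϕ (Dϕ y) y)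
    (dφ : (Fin k → ℝ) → (Fin k → ℝ) → ℝ)
    (hdφ : ∀ x y, dφ x y = φ x - φ y - Dφ y (x - y))
    (dϕ : ℝ → ℝ → ℝ)
    (hdϕ : ∀ p q, dϕ p q = ϕ p - ϕ q - Dϕ q * (p - q))
    (hdom : ∀ x ∈ stdSimplex ℝ (Fin k), ∀ y ∈ stdSimplex ℝ (Fin k), ∀ i : Fin k,
      dϕ (x i) (y i) ≤ dφ x y) :
    ∀ᵐ ω ∂μ,
      dϕ ((μ[(fun ω' => if Y ω' = c (g (X ω')) then (1 : ℝ) else 0) |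
            MeasurableSpace.comap (fun ω' => h (g (X ω'))) inferInstance]) ω)
          (h (g (X ω)))
        ≤ (μ[(fun ω' =>
              dφ ((μ[(fun ω'' i => if Y ω'' = i then (1 : ℝ) else 0) |
                    MeasurableSpace.comap X inferInstance]) ω')
                (g (X ω'))) |
            MeasurableSpace.comap (fun ω' => h (g (X ω'))) inferInstance]) ω := by
  haveI : Nonempty (Fin k) := ⟨c 0⟩
  -- h is measurable, being the finite supremum of the coordinates
  have hhm : Measurable h := by
    have h2 : h = Finset.univ.sup' Finset.univ_nonempty (fun i (z : Fin k → ℝ) => z i) := by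
      funext z
      rw [Finset.sup'_apply]
      refine le_antisymm ?_ (Finset.sup'_le _ _ fun i _ => by rw [hh]; exact hc z i)
      rw [hh]
      exact Finset.le_sup' (fun i => z i) (Finset.mem_univ (c z))
    rw [h2]
    exact Finset.measurable_sup' _ fun i _ => measurable_pi_apply i
  set q : Ω → ℝ := fun ω' => h (g (X ω')) with hq_def
  set mH := MeasurableSpace.comap q inferInstance with hmH_def
  set mX := MeasurableSpace.comap X inferInstance with hmX_def
  have hqm : Measurable[m0] q := hhm.comp (hg.comp hX)
  have hmH : mH ≤ m0 := hqm.comap_le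
  have hmX : mX ≤ m0 := hX.comap_le
  have hmHX : mH ≤ mX := by
    rw [hmH_def, hmX_def]
    intro s hs
    obtain ⟨t, ht, rfl⟩ := hs
    exact ⟨(fun x => h (g x)) ⁻¹' t, (hhm.comp hg) ht, rfl⟩
  have hmGX : MeasurableSpace.comap (fun ω => g (X ω)) inferInstance ≤ mX := by
    rw [hmX_def]
    intro s hs
    obtain ⟨t, ht, rfl⟩ := hs
    exact ⟨g ⁻¹' t, hg ht, rfl⟩
  have hc0X : Measurable[mX] fun ω => c (g (X ω)) := hcmeas.mono hmGX le_rfl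
  have hc0 : Measurable[m0] fun ω => c (g (X ω)) := hc0X.mono hmX le_rfl
  haveI : IsFiniteMeasure (μ.trim hmH) := isFiniteMeasure_trim hmH
  haveI : IsFiniteMeasure (μ.trim hmX) := isFiniteMeasure_trim hmX
  letI : MeasurableSpace Ω := m0
  have hqmH : Measurable[mH] q := by
    rw [hmH_def]; exact Measurable.of_comap_le le_rfl
  -- the vector of indicator functions and its conditional expectation π
  set e : Ω → Fin k → ℝ := fun ω'' i => if Y ω'' = i then (1 : ℝ) else 0 with he_def
  set piv := μ[e|mX] with hpiv_def
  set F : Ω → ℝ := fun ω' => if Y ω' = c (g (X ω')) then (1 : ℝ) else 0 with hF_def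
  set a := μ[F|mH] with ha_def
  set fφ : Ω → ℝ := fun ω' => dφ (piv ω') (g (X ω')) with hfφ_def
  have he_m : Measurable[m0] e :=
    measurable_pi_lambda _ fun i =>
      Measurable.ite (hY (measurableSet_singleton i)) measurable_const measurable_const
  have he_int : Integrable e μ := by
    refine Integrable.mono' (integrable_const (1:ℝ)) he_m.aestronglyMeasurable
      (ae_of_all _ fun ω => ?_)
    rw [pi_norm_le_iff_of_nonneg zero_le_one]
    intro i
    simp only [he_def]
    split_ifs <;> simp
  have hei_int : ∀ i : Fin k, Integrable (fun ω => e ω i) μ := fun i =>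
    (ContinuousLinearMap.proj (R := ℝ) (φ := fun _ : Fin k => ℝ) i).integrable_comp he_int
  have hpicoord : ∀ i : Fin k, (fun ω => piv ω i) =ᵐ[μ] μ[fun ω => e ω i|mX] := fun i =>
    condexp_pi_apply μ hmX he_int i
  have hcoord01 : ∀ (v : Fin k → ℝ), v ∈ stdSimplex ℝ (Fin k) → ∀ i, v i ∈ Set.Icc (0:ℝ) 1 := by
    intro v hv i
    refine ⟨hv.1 i, ?_⟩
    calc v i ≤ ∑ j, v j := Finset.single_le_sum (fun j _ => hv.1 j) (Finset.mem_univ i)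
    _ = 1 := hv.2
  have hpivm : Measurable[m0] piv := (stronglyMeasurable_condExp.mono hmX).measurable
  -- π lies a.e. in the standard simplex
  have hpiv_simplex : ∀ᵐ ω ∂μ, piv ω ∈ stdSimplex ℝ (Fin k) := by
    have hnn : ∀ i : Fin k, ∀ᵐ ω ∂μ, 0 ≤ piv ω i := by
      intro i
      have h1 : (0:Ω→ℝ) ≤ᵐ[μ] μ[fun ω => e ω i|mX] :=
        condExp_nonneg (ae_of_all _ fun ω => by
          simp only [he_def, Pi.zero_apply]; split_ifs <;> norm_num)
      filter_upwards [h1, hpicoord i] with ω h1ω h2ω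
      rw [h2ω]
      simpa using h1ω
    have hsum : ∀ᵐ ω ∂μ, ∑ i, piv ω i = 1 := by
      have hone : (fun ω => ∑ i : Fin k, e ω i) = fun _ => (1:ℝ) := by
        funext ω
        simp only [he_def]
        rw [Finset.sum_ite_eq]
        simp
      have h2 : μ[fun ω => ∑ i : Fin k, e ω i|mX] = fun _ => (1:ℝ) := by
        rw [hone]; exact condExp_const hmX (1:ℝ)
      have h3 : μ[∑ i : Fin k, (fun ω => e ω i)|mX]
          =ᵐ[μ] ∑ i : Fin k, μ[fun ω => e ω i|mX] := condExp_finsetSum (fun i _ => hei_int i) mX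
      have h4 : (∑ i : Fin k, (fun ω => e ω i)) = fun ω => ∑ i : Fin k, e ω i := by
        funext ω; simp [Finset.sum_apply]
      rw [h4] at h3
      filter_upwards [ae_all_iff.mpr hpicoord, h3] with ω h5ω h3ω
      calc ∑ i, piv ω i = ∑ i, (μ[fun ω' => e ω' i|mX]) ω :=
            Finset.sum_congr rfl fun i _ => h5ω i
      _ = (∑ i : Fin k, μ[fun ω' => e ω' i|mX]) ω := (Finset.sum_apply ω _ _).symm
      _ = (μ[fun ω' => ∑ i, e ω' i|mX]) ω := h3ω.symm
      _ = 1 := congrFun h2 ω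
    filter_upwards [ae_all_iff.mpr hnn, hsum] with ω h1ω h2ω
    exact ⟨h1ω, h2ω⟩
  -- the confidence-coordinate process Z
  set Z : Ω → ℝ := fun ω => piv ω (c (g (X ω))) with hZ_def
  have hZsum : ∀ ω, Z ω = ∑ i : Fin k, (if c (g (X ω)) = i then piv ω i else 0) := by
    intro ω
    rw [Finset.sum_ite_eq]
    simp [hZ_def]
  have hZm : Measurable[m0] Z := by
    have hZeq : Z = fun ω => ∑ i : Fin k, (if c (g (X ω)) = i then piv ω i else 0) :=
      funext hZsum
    rw [hZeq]
    exact Finset.measurable_sum _ fun i _ =>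
      Measurable.ite (hc0 (measurableSet_singleton i))
        ((measurable_pi_apply i).comp hpivm) measurable_const
  have hZ01 : ∀ᵐ ω ∂μ, Z ω ∈ Set.Icc (0:ℝ) 1 := by
    filter_upwards [hpiv_simplex] with ω hω
    exact hcoord01 _ hω _
  have hq01 : ∀ ω, q ω ∈ Set.Icc (0:ℝ) 1 := by
    intro ω
    simp only [hq_def]
    rw [hh]
    exact hcoord01 _ (hgs (X ω)) _
  have hZ_int : Integrable Z μ := by
    refine Integrable.mono' (integrable_const (1:ℝ)) hZm.aestronglyMeasurable ?_
    filter_upwards [hZ01] with ω hω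
    rw [Real.norm_eq_abs, abs_le]
    exact ⟨by linarith [hω.1], hω.2⟩
  -- Step 1: E[F | mX] = Z a.e.
  have hint_i : ∀ i : Fin k,
      Integrable ((fun ω => if c (g (X ω)) = i then (1:ℝ) else 0) * (fun ω => e ω i)) μ := by
    intro i
    refine Integrable.mono' (integrable_const (1:ℝ)) ?_ (ae_of_all _ fun ω => ?_)
    · exact ((Measurable.ite (hc0 (measurableSet_singleton i)) measurable_const
        measurable_const).mul ((measurable_pi_apply i).comp he_m)).aestronglyMeasurable
    · simp only [Pi.mul_apply, he_def]
      split_ifs <;> norm_num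
  have hstep1 : μ[F|mX] =ᵐ[μ] Z := by
    have hGdef : F = ∑ i : Fin k,
        (fun ω => if c (g (X ω)) = i then (1:ℝ) else 0) * (fun ω => e ω i) := by
      funext ω
      simp only [Finset.sum_apply, Pi.mul_apply, hF_def, he_def, ite_mul, one_mul, zero_mul]
      rw [Finset.sum_ite_eq]
      simp
    have h1 : μ[F|mX] =ᵐ[μ] ∑ i : Fin k,
        μ[(fun ω => if c (g (X ω)) = i then (1:ℝ) else 0) * (fun ω => e ω i)|mX] := by
      rw [hGdef]
      exact condExp_finsetSum (fun i _ => hint_i i) mX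
    have h2 : ∀ i : Fin k,
        μ[(fun ω => if c (g (X ω)) = i then (1:ℝ) else 0) * (fun ω => e ω i)|mX]
          =ᵐ[μ] fun ω => (if c (g (X ω)) = i then (1:ℝ) else 0) * piv ω i := by
      intro i
      have hχsm : StronglyMeasurable[mX] (fun ω => if c (g (X ω)) = i then (1:ℝ) else 0) :=
        (Measurable.ite (hc0X (measurableSet_singleton i)) measurable_const
          measurable_const).stronglyMeasurable
      refine (condExp_mul_of_stronglyMeasurable_left hχsm (hint_i i) (hei_int i)).trans ?_
      filter_upwards [hpicoord i] with ω hω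
      simp only [Pi.mul_apply]
      rw [← hω]
    filter_upwards [h1, ae_all_iff.mpr h2] with ω h1ω h3ω
    rw [h1ω, Finset.sum_apply, hZsum ω]
    refine Finset.sum_congr rfl fun i _ => ?_
    rw [h3ω i]
    split_ifs <;> simp
  -- F is integrable
  have hF_int : Integrable F μ := by
    refine Integrable.mono' (integrable_const (1:ℝ)) ?_ (ae_of_all _ fun ω => ?_)
    · exact (Measurable.ite (measurableSet_eq_fun hY hc0) measurable_const
        measurable_const).aestronglyMeasurable
    · simp only [hF_def]
      split_ifs <;> norm_num
  -- a = E[Z | mH] a.e. (tower property)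
  have haZ : a =ᵐ[μ] μ[Z|mH] :=
    ((condExp_condExp_of_le hmHX hmX (f := F)).symm).trans (condExp_congr_ae hstep1)
  -- a lies a.e. in [0,1]
  have ha01 : ∀ᵐ ω ∂μ, a ω ∈ Set.Icc (0:ℝ) 1 := by
    have h0 : (0:Ω→ℝ) ≤ᵐ[μ] a :=
      condExp_nonneg (ae_of_all _ fun ω => by
        simp only [hF_def, Pi.zero_apply]; split_ifs <;> norm_num)
    have h1 : a ≤ᵐ[μ] fun _ => (1:ℝ) := by
      have h1' := condExp_mono (m := mH) hF_int (integrable_const (1:ℝ))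
        (ae_of_all _ fun ω => by simp only [hF_def]; split_ifs <;> norm_num)
      rwa [condExp_const hmH (1:ℝ)] at h1'
    filter_upwards [h0, h1] with ω g0 g1
    exact ⟨by simpa using g0, g1⟩
  -- derivative identifications and continuity
  have hDφeq : ∀ y, Dφ y = fderiv ℝ φ y := fun y => ((hDφ y).fderiv).symm
  have hDϕeq : ∀ y, Dϕ y = deriv ϕ y := fun y => ((hDϕ y).deriv).symm
  have hderiv_cont : Continuous (deriv ϕ) := hϕC1.continuous_deriv le_rfl
  have hDcont : Continuous fun p : (Fin k → ℝ) × (Fin k → ℝ) =>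
      φ p.1 - φ p.2 - (fderiv ℝ φ p.2) (p.1 - p.2) := by
    have h1 : Continuous (fderiv ℝ φ) := hφC1.continuous_fderiv one_ne_zero
    have h2 : Continuous fun p : (Fin k → ℝ) × (Fin k → ℝ) =>
        (fderiv ℝ φ p.2) (p.1 - p.2) :=
      isBoundedBilinearMap_apply.continuous.comp
        ((h1.comp continuous_snd).prodMk (continuous_fst.sub continuous_snd))
    exact ((hφC1.continuous.comp continuous_fst).sub
      (hφC1.continuous.comp continuous_snd)).sub h2
  have hEcont : Continuous fun p : ℝ × ℝ => ϕ p.1 - ϕ p.2 - deriv ϕ p.2 * (p.1 - p.2) :=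
    ((hϕC1.continuous.comp continuous_fst).sub (hϕC1.continuous.comp continuous_snd)).sub
      ((hderiv_cont.comp continuous_snd).mul (continuous_fst.sub continuous_snd))
  obtain ⟨Cφ, hCφ⟩ := ((isCompact_stdSimplex ℝ (Fin k)).prod
    (isCompact_stdSimplex ℝ (Fin k))).exists_bound_of_continuousOn hDcont.continuousOn
  obtain ⟨Cϕ, hCϕ⟩ := ((isCompact_Icc (a := (0:ℝ)) (b := 1)).prod
    (isCompact_Icc (a := (0:ℝ)) (b := 1))).exists_bound_of_continuousOn hEcont.continuousOn
  obtain ⟨Cd, hCd⟩ := (isCompact_Icc (a := (0:ℝ)) (b := 1)).exists_bound_of_continuousOn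
    hderiv_cont.continuousOn
  have hCd0 : 0 ≤ Cd := le_trans (norm_nonneg _) (hCd 0 ⟨le_rfl, zero_le_one⟩)
  -- integrability of fφ
  have hfφ_eq : fφ = fun ω => (fun p : (Fin k → ℝ) × (Fin k → ℝ) =>
      φ p.1 - φ p.2 - (fderiv ℝ φ p.2) (p.1 - p.2)) (piv ω, g (X ω)) := by
    funext ω
    simp only [hfφ_def]
    rw [hdφ, hDφeq]
  have hfφ_meas : AEStronglyMeasurable fφ μ := by
    rw [hfφ_eq]
    exact (hDcont.measurable.comp (hpivm.prodMk (hg.comp hX))).aestronglyMeasurable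
  have hfφ_int : Integrable fφ μ := by
    refine Integrable.mono' (integrable_const Cφ) hfφ_meas ?_
    filter_upwards [hpiv_simplex] with ω hω
    rw [hfφ_eq]
    exact hCφ (piv ω, g (X ω)) (Set.mem_prod.mpr ⟨hω, hgs (X ω)⟩)
  -- integrability of dϕ(Z, q)
  have hdZq_eq : (fun ω => dϕ (Z ω) (q ω)) = fun ω => (fun p : ℝ × ℝ =>
      ϕ p.1 - ϕ p.2 - deriv ϕ p.2 * (p.1 - p.2)) (Z ω, q ω) := by
    funext ω
    rw [hdϕ, hDϕeq]
  have hdZq_int : Integrable (fun ω => dϕ (Z ω) (q ω)) μ := by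
    refine Integrable.mono' (integrable_const Cϕ) ?_ ?_
    · rw [hdZq_eq]
      exact (hEcont.measurable.comp (hZm.prodMk hqm)).aestronglyMeasurable
    · filter_upwards [hZ01] with ω hω
      rw [hdϕ, hDϕeq]
      exact hCϕ (Z ω, q ω) (Set.mem_prod.mpr ⟨hω, hq01 ω⟩)
  -- integrability and mH-measurability of u = dϕ(a, q)
  have hasm : StronglyMeasurable[mH] a := stronglyMeasurable_condExp
  have husm : StronglyMeasurable[mH] (fun ω => dϕ (a ω) (q ω)) := by
    have hueq : (fun ω => dϕ (a ω) (q ω)) = fun ω => (fun p : ℝ × ℝ =>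
        ϕ p.1 - ϕ p.2 - deriv ϕ p.2 * (p.1 - p.2)) (a ω, q ω) := by
      funext ω
      rw [hdϕ, hDϕeq]
    rw [hueq]
    exact hEcont.comp_stronglyMeasurable (hasm.prodMk hqmH.stronglyMeasurable)
  have hu_int : Integrable (fun ω => dϕ (a ω) (q ω)) μ := by
    refine Integrable.mono' (integrable_const Cϕ) ((husm.mono hmH).aestronglyMeasurable) ?_
    filter_upwards [ha01] with ω hω
    rw [hdϕ, hDϕeq]
    exact hCϕ (a ω, q ω) (Set.mem_prod.mpr ⟨hω, hq01 ω⟩)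
  -- the correction term r * (Z - a)
  set r : Ω → ℝ := fun ω => Dϕ (a ω) - Dϕ (q ω) with hr_def
  have hrsm : StronglyMeasurable[mH] r := by
    have hreq : r = fun ω => deriv ϕ (a ω) - deriv ϕ (q ω) := by
      funext ω
      simp only [hr_def, hDϕeq]
    rw [hreq]
    exact (hderiv_cont.comp_stronglyMeasurable hasm).sub
      (hderiv_cont.comp_stronglyMeasurable hqmH.stronglyMeasurable)
  have ham : Measurable[m0] a := (stronglyMeasurable_condExp.mono hmH).measurable
  have hv_int : Integrable (Z - a) μ := hZ_int.sub integrable_condExp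
  have hrv_int : Integrable (r * (Z - a)) μ := by
    refine Integrable.mono' (integrable_const (Cd + Cd)) ?_ ?_
    · exact ((hrsm.mono hmH).aestronglyMeasurable.mul
        (hZm.sub ham).aestronglyMeasurable)
    · filter_upwards [ha01, hZ01] with ω h1 h2
      simp only [Pi.mul_apply, Pi.sub_apply]
      rw [norm_mul]
      have hb1 : ‖r ω‖ ≤ Cd + Cd := by
        simp only [hr_def, hDϕeq]
        exact (norm_sub_le _ _).trans (add_le_add (hCd _ h1) (hCd _ (hq01 ω)))
      have hb2 : ‖Z ω - a ω‖ ≤ 1 := by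
        rw [Real.norm_eq_abs, abs_le]
        constructor <;> [linarith [h2.1, h1.2]; linarith [h2.2, h1.1]]
      calc ‖r ω‖ * ‖Z ω - a ω‖ ≤ (Cd + Cd) * 1 :=
            mul_le_mul hb1 hb2 (norm_nonneg _) (by linarith)
      _ = Cd + Cd := mul_one _
  have hW_int : Integrable ((fun ω => dϕ (a ω) (q ω)) + r * (Z - a)) μ := hu_int.add hrv_int
  -- E[Z - a | mH] = 0 a.e.
  have havg : μ[Z - a|mH] =ᵐ[μ] (0 : Ω → ℝ) := by
    have h1 := condExp_sub (m := mH) hZ_int integrable_condExp (μ := μ) (f := Z) (g := a)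
    have h2 : μ[a|mH] = a :=
      condExp_of_stronglyMeasurable hmH stronglyMeasurable_condExp integrable_condExp
    filter_upwards [h1, haZ] with ω h1ω h2ω
    rw [h1ω, Pi.sub_apply, h2, ← h2ω]
    simp
  -- conditional Jensen: E[W | mH] = dϕ(a, q) a.e.
  have hcondW : μ[(fun ω => dϕ (a ω) (q ω)) + r * (Z - a)|mH]
      =ᵐ[μ] fun ω => dϕ (a ω) (q ω) := by
    have h1 := condExp_add (m := mH) hu_int hrv_int
    have h2 : μ[fun ω => dϕ (a ω) (q ω)|mH] = fun ω => dϕ (a ω) (q ω) :=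
      condExp_of_stronglyMeasurable hmH husm hu_int
    have h3 := condExp_mul_of_stronglyMeasurable_left (m := mH) hrsm hrv_int hv_int
    filter_upwards [h1, h3, havg] with ω h1ω h3ω h4ω
    rw [h1ω, Pi.add_apply, h2, h3ω, Pi.mul_apply, h4ω]
    simp
  -- pointwise gradient inequality
  have hWle : ((fun ω => dϕ (a ω) (q ω)) + r * (Z - a)) ≤ᵐ[μ] fun ω => dϕ (Z ω) (q ω) := by
    filter_upwards [ha01, hZ01] with ω h1 h2
    simp only [Pi.add_apply, Pi.mul_apply, Pi.sub_apply, hr_def]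
    have hgrad := convexOn_grad_le hϕconv h1 h2 (hDϕ (a ω))
    rw [hdϕ (a ω) (q ω), hdϕ (Z ω) (q ω)]
    nlinarith [hgrad]
  -- Step 4: dϕ(Z, q) ≤ fφ a.e.
  have hstep4 : (fun ω => dϕ (Z ω) (q ω)) ≤ᵐ[μ] fφ := by
    filter_upwards [hpiv_simplex] with ω hω
    have hd := hdom (piv ω) hω (g (X ω)) (hgs (X ω)) (c (g (X ω)))
    simp only [hfφ_def, hZ_def, hq_def]
    rw [hh]
    exact hd
  have hstep5 : μ[fun ω => dϕ (Z ω) (q ω)|mH] ≤ᵐ[μ] μ[fφ|mH] :=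
    condExp_mono hdZq_int hfφ_int hstep4
  have h6 : μ[(fun ω => dϕ (a ω) (q ω)) + r * (Z - a)|mH]
      ≤ᵐ[μ] μ[fun ω => dϕ (Z ω) (q ω)|mH] := condExp_mono hW_int hdZq_int hWle
  filter_upwards [h6, hcondW, hstep5] with ω h6ω hWω h5ω
  calc dϕ (a ω) (q ω) = (μ[(fun ω => dϕ (a ω) (q ω)) + r * (Z - a)|mH]) ω := hWω.symm
  _ ≤ (μ[fun ω => dϕ (Z ω) (q ω)|mH]) ω := h6ω
  _ ≤ (μ[fφ|mH]) ω := h5ω
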